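/- arXiv:1407.3206 — 3 statements merged into one kernel-verified Lean document; each statement's English description precedes it below -/
import Mathlib

section
/- For every acceptance level α with 0 < α < e^{-1}, there exists a unique γ in the open interval (0,1) satisfying γ·α^{γ-1} = 1. -/
/-!
Taking logarithms, for `γ ∈ (0, 1)` the equation says that the secant slope `log γ / (γ - 1)` of
`log` through `1` equals `-log α`, which exceeds `1` because `α < e⁻¹`. By strict concavity of
`log` this slope is strictly decreasing, so it takes each value at most once; it exceeds `c` at
`e^{-c}` and falls below `c` at `1 / c` (as `log c < c - 1`), so the value `c = -log α` is attained.
-/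

open Real Set

namespace Real

theorem log_div_sub_one_strictAntiOn :
    StrictAntiOn (fun x => log x / (x - 1)) (Ioi 0 \ {1}) := by
  intro x hx y hy hxy
  have := strictConcaveOn_log_Ioi.secant_strict_mono (a := 1) (mem_Ioi.2 one_pos) hx.1 hy.1
    hx.2 hy.2 hxy
  simpa only [log_one, sub_zero] using this

theorem exists_log_div_sub_one_eq {c : ℝ} (hc : 1 < c) :
    ∃ x ∈ Ioo (0 : ℝ) 1, log x / (x - 1) = c := by
  have hc0 : 0 < c := one_pos.trans hc
  have hexp_lt : exp (-c) < 1 / c := by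
    rw [exp_neg, ← one_div]
    exact one_div_lt_one_div_of_lt hc0 ((add_one_lt_exp hc0.ne').trans' (by linarith))
  have hinv_lt : 1 / c < 1 := (div_lt_one hc0).2 hc
  have hsub : Icc (exp (-c)) (1 / c) ⊆ Ioo 0 1 := fun x hx =>
    ⟨(exp_pos _).trans_le hx.1, hx.2.trans_lt hinv_lt⟩
  have hcont : ContinuousOn (fun x => log x / (x - 1)) (Icc (exp (-c)) (1 / c)) := by
    refine ContinuousOn.div ?_ (by fun_prop) fun x hx => sub_ne_zero.2 (hsub hx).2.ne
    exact continuousOn_log.mono fun x hx => (hsub hx).1.ne'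
  have hleft : c < log (exp (-c)) / (exp (-c) - 1) := by
    rw [log_exp, lt_div_iff_of_neg (sub_neg.2 (exp_lt_one_iff.2 (by linarith)))]
    nlinarith [exp_pos (-c)]
  have hright : log (1 / c) / (1 / c - 1) < c := by
    have hlog : log c < c - 1 := log_lt_sub_one_of_pos hc0 hc.ne'
    rw [div_lt_iff_of_neg (sub_neg.2 hinv_lt), one_div, log_inv, mul_sub, mul_inv_cancel₀ hc0.ne']
    linarith
  obtain ⟨x, hx, hx_eq⟩ := intermediate_value_Icc' hexp_lt.le hcont ⟨hright.le, hleft.le⟩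
  exact ⟨x, hsub hx, hx_eq⟩

theorem mul_rpow_sub_one_eq_one_iff {a x : ℝ} (ha : 0 < a) (hx : 0 < x) (hx1 : x ≠ 1) :
    x * a ^ (x - 1) = 1 ↔ log x / (x - 1) = -log a := by
  have hexp : x * a ^ (x - 1) = exp (log x + log a * (x - 1)) := by
    rw [rpow_def_of_pos ha, exp_add, exp_log hx]
  rw [hexp, exp_eq_one_iff, div_eq_iff (sub_ne_zero.2 hx1)]
  constructor <;> intro h <;> linarith

end Real

theorem stmt_0 (α : ℝ) (hα0 : 0 < α) (hα1 : α < Real.exp (-1)) :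
    ∃! γ : ℝ, γ ∈ Set.Ioo (0:ℝ) 1 ∧ γ * α ^ (γ - 1) = 1 := by
  have hlog : 1 < -log α := by
    have := log_lt_log hα0 hα1
    rw [log_exp] at this
    linarith
  have hmem {γ : ℝ} (hγ : γ ∈ Ioo (0 : ℝ) 1) : γ ∈ Ioi 0 \ {1} := ⟨hγ.1, hγ.2.ne⟩
  obtain ⟨γ, hγ, hγ_eq⟩ := exists_log_div_sub_one_eq hlog
  refine ⟨γ, ⟨hγ, (mul_rpow_sub_one_eq_one_iff hα0 hγ.1 hγ.2.ne).2 hγ_eq⟩, ?_⟩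
  rintro y ⟨hy, hy_eq⟩
  rw [mul_rpow_sub_one_eq_one_iff hα0 hy.1 hy.2.ne] at hy_eq
  exact log_div_sub_one_strictAntiOn.injOn (hmem hy) (hmem hγ) (hy_eq.trans hγ_eq.symm)
end

section
/- (MAP with uniform prior and significance level) With q = 1/2 and γ the unique solution in (0,1) of γ·α^{γ-1} = 1 for α ∈ (0,e^{-1}), the conditional MAP estimate of the change-point indicator equals 1 if and only if the p-value pᵢ satisfies pᵢ < α. -/
/-- Posterior mass of the indicator value `ε ∈ {0,1}` in the Bernoulli detector model. -/
noncomputable def posteriorMass (γ p q : ℝ) (ε : ℕ) : ℝ :=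
  (γ * p ^ (γ - 1)) ^ ε * q ^ ε * (1 - q) ^ (1 - ε)

theorem stmt_7 (α γ p : ℝ) (hα : α ∈ Set.Ioo (0:ℝ) (Real.exp (-1)))
    (hγ : γ ∈ Set.Ioo (0:ℝ) 1) (hcal : γ * α ^ (γ - 1) = 1)
    (hp : p ∈ Set.Ioo (0:ℝ) 1) :
    posteriorMass γ p (1/2) 1 > posteriorMass γ p (1/2) 0 ↔ p < α := by
  obtain ⟨hα0, hα1⟩ := hα
  obtain ⟨hγ0, hγ1⟩ := hγ
  obtain ⟨hp0, hp1⟩ := hp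
  have hz : γ - 1 < 0 := by linarith
  simp only [posteriorMass, pow_one, pow_zero, one_mul, mul_one]
  rw [show (1:ℕ) - 1 = 0 from rfl, pow_zero, mul_one]
  constructor
  · intro h
    have h1 : γ * α ^ (γ - 1) < γ * p ^ (γ - 1) := by
      rw [hcal]
      nlinarith
    have h2 : α ^ (γ - 1) < p ^ (γ - 1) := lt_of_mul_lt_mul_left h1 hγ0.le
    exact (Real.rpow_lt_rpow_iff_of_neg hα0 hp0 hz).mp h2
  · intro h
    have h2 : α ^ (γ - 1) < p ^ (γ - 1) :=
      (Real.rpow_lt_rpow_iff_of_neg hα0 hp0 hz).mpr h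
    have h1 : γ * α ^ (γ - 1) < γ * p ^ (γ - 1) := by
      exact mul_lt_mul_of_pos_left h2 hγ0
    rw [hcal] at h1
    nlinarith
end

section
/- Under the null hypothesis of uniformly random rank assignment, the variance of the Mann-Whitney statistic U_Y equals n_Y·n_Z·(n_Y+n_Z+1)/12. -/
open Finset

lemma mw_count_superset {α : Type*} [DecidableEq α] (t u : Finset α) (k : ℕ)
    (hu : u ⊆ t) (hk : u.card ≤ k) :
    ((t.powersetCard k).filter (fun s => u ⊆ s)).card
      = (t.card - u.card).choose (k - u.card) := by
  rw [← Finset.card_sdiff_of_subset hu, ← Finset.card_powersetCard]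
  apply Finset.card_bij' (fun s _ => s \ u) (fun a _ => a ∪ u)
  · intro s hs
    simp only [Finset.mem_filter, Finset.mem_powersetCard] at hs
    obtain ⟨⟨hst, hcard⟩, hus⟩ := hs
    rw [Finset.mem_powersetCard]
    exact ⟨Finset.sdiff_subset_sdiff hst (le_refl u), by rw [Finset.card_sdiff_of_subset hus, hcard]⟩
  · intro a ha
    rw [Finset.mem_powersetCard] at ha
    obtain ⟨hat, hacard⟩ := ha
    have hdisj : Disjoint a u := Finset.disjoint_of_subset_left hat Finset.sdiff_disjoint
    simp only [Finset.mem_filter, Finset.mem_powersetCard]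
    refine ⟨⟨Finset.union_subset (hat.trans Finset.sdiff_subset) hu, ?_⟩,
      Finset.subset_union_right⟩
    rw [Finset.card_union_of_disjoint hdisj, hacard]
    have := Finset.card_le_card hu
    omega
  · intro s hs
    simp only [Finset.mem_filter] at hs
    exact Finset.sdiff_union_of_subset hs.2
  · intro a ha
    rw [Finset.mem_powersetCard] at ha
    exact Finset.union_sdiff_cancel_right
      (Finset.disjoint_of_subset_left ha.1 Finset.sdiff_disjoint)

lemma mw_count_superset_zero {α : Type*} [DecidableEq α] (t u : Finset α) (k : ℕ)
    (hk : k < u.card) :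
    ((t.powersetCard k).filter (fun s => u ⊆ s)) = ∅ := by
  rw [Finset.filter_eq_empty_iff]
  intro s hs hus
  rw [Finset.mem_powersetCard] at hs
  have := Finset.card_le_card hus
  omega

lemma mw_ind_sum (t s : Finset ℕ) (hs : s ⊆ t) (f : ℕ → ℝ) :
    ∑ i ∈ s, f i = ∑ i ∈ t, if i ∈ s then f i else 0 := by
  rw [← Finset.sum_filter, Finset.filter_mem_eq_inter, Finset.inter_eq_right.mpr hs]

lemma mw_sum_powerset_sum (t : Finset ℕ) (k : ℕ) (hk : 1 ≤ k) (f : ℕ → ℝ) :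
    ∑ s ∈ t.powersetCard k, ∑ i ∈ s, f i
      = ((t.card - 1).choose (k - 1) : ℝ) * ∑ i ∈ t, f i := by
  have h1 : ∀ s ∈ t.powersetCard k, ∑ i ∈ s, f i = ∑ i ∈ t, if i ∈ s then f i else 0 := by
    intro s hs
    rw [Finset.mem_powersetCard] at hs
    exact mw_ind_sum t s hs.1 f
  rw [Finset.sum_congr rfl h1, Finset.sum_comm, Finset.mul_sum]
  apply Finset.sum_congr rfl
  intro i hi
  rw [← Finset.sum_filter, Finset.sum_const]
  have hcnt : (Finset.filter (fun s => i ∈ s) (t.powersetCard k)).card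
      = (t.card - 1).choose (k - 1) := by
    have h := mw_count_superset t {i} k (Finset.singleton_subset_iff.mpr hi) (by simpa using hk)
    simp only [Finset.card_singleton, Finset.singleton_subset_iff] at h
    exact h
  rw [hcnt, nsmul_eq_mul]

lemma mw_sum_powerset_sq (t : Finset ℕ) (k : ℕ) (hk : 1 ≤ k) (f : ℕ → ℝ) :
    ∑ s ∈ t.powersetCard k, (∑ i ∈ s, f i) ^ 2
      = ((t.card - 1).choose (k - 1) : ℝ) * ∑ i ∈ t, (f i) ^ 2
        + (if 2 ≤ k then ((t.card - 2).choose (k - 2) : ℝ) else 0)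
          * ((∑ i ∈ t, f i) ^ 2 - ∑ i ∈ t, (f i) ^ 2) := by
  set c2 : ℝ := if 2 ≤ k then ((t.card - 2).choose (k - 2) : ℝ) else 0 with hc2def
  have h1 : ∀ s ∈ t.powersetCard k, (∑ i ∈ s, f i) ^ 2
      = ∑ i ∈ t, ∑ j ∈ t, (if i ∈ s ∧ j ∈ s then f i * f j else 0) := by
    intro s hs
    rw [Finset.mem_powersetCard] at hs
    rw [mw_ind_sum t s hs.1 f, sq, Finset.sum_mul_sum]
    apply Finset.sum_congr rfl; intro i _
    apply Finset.sum_congr rfl; intro j _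
    by_cases h1 : i ∈ s <;> by_cases h2 : j ∈ s <;> simp [h1, h2]
  rw [Finset.sum_congr rfl h1, Finset.sum_comm]
  have h2 : ∀ i ∈ t, ∑ s ∈ t.powersetCard k, ∑ j ∈ t, (if i ∈ s ∧ j ∈ s then f i * f j else 0)
      = ∑ j ∈ t, ((Finset.filter (fun s => i ∈ s ∧ j ∈ s) (t.powersetCard k)).card : ℝ)
          * (f i * f j) := by
    intro i _
    rw [Finset.sum_comm]
    apply Finset.sum_congr rfl
    intro j _
    rw [← Finset.sum_filter, Finset.sum_const, nsmul_eq_mul]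
  rw [Finset.sum_congr rfl h2]
  have h3 : ∀ i ∈ t, ∑ j ∈ t, ((Finset.filter (fun s => i ∈ s ∧ j ∈ s) (t.powersetCard k)).card : ℝ)
          * (f i * f j)
      = ((t.card - 1).choose (k - 1) : ℝ) * (f i) ^ 2
        + c2 * ∑ j ∈ t.erase i, f i * f j := by
    intro i hi
    rw [← Finset.add_sum_erase t _ hi]
    congr 1
    · have : (Finset.filter (fun s => i ∈ s ∧ i ∈ s) (t.powersetCard k)).card
          = (t.card - 1).choose (k - 1) := by
        have h := mw_count_superset t {i} k (Finset.singleton_subset_iff.mpr hi) (by simpa using hk)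
        simpa using h
      rw [this]; ring
    · rw [Finset.mul_sum]
      apply Finset.sum_congr rfl
      intro j hj
      have hji : j ≠ i := Finset.ne_of_mem_erase hj
      have hjt : j ∈ t := Finset.mem_of_mem_erase hj
      have hpair : ({i, j} : Finset ℕ).card = 2 := by
        rw [Finset.card_insert_of_notMem (by simp [hji.symm]), Finset.card_singleton]
      have hsub : ({i, j} : Finset ℕ) ⊆ t := by
        intro x hx; simp only [Finset.mem_insert, Finset.mem_singleton] at hx
        rcases hx with rfl | rfl; exact hi; exact hjt
      have hcnt : (Finset.filter (fun s => i ∈ s ∧ j ∈ s) (t.powersetCard k)).card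
          = (Finset.filter (fun s => ({i, j} : Finset ℕ) ⊆ s) (t.powersetCard k)).card := by
        congr 1
        apply Finset.filter_congr
        intro s _
        simp [Finset.insert_subset_iff]
      by_cases h2k : 2 ≤ k
      · rw [hcnt, mw_count_superset t {i, j} k hsub (by omega), hpair,
          hc2def, if_pos h2k]
      · rw [hcnt, mw_count_superset_zero t {i, j} k (by omega), hc2def, if_neg h2k]
        simp
  rw [Finset.sum_congr rfl h3, Finset.sum_add_distrib, ← Finset.mul_sum, ← Finset.mul_sum]
  congr 1
  congr 1
  have h4 : ∀ i ∈ t, ∑ j ∈ t.erase i, f i * f j = f i * (∑ j ∈ t, f j) - (f i) ^ 2 := by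
    intro i hi
    rw [← Finset.mul_sum, Finset.sum_erase_eq_sub hi]
    ring
  rw [Finset.sum_congr rfl h4, Finset.sum_sub_distrib, ← Finset.sum_mul, sq]

lemma mw_gauss (N : ℕ) : ∑ i ∈ Finset.Icc 1 N, (i : ℝ) = N * (N + 1) / 2 := by
  induction N with
  | zero => simp
  | succ n ih =>
    rw [Finset.sum_Icc_succ_top (by omega), ih]
    push_cast; ring

lemma mw_gauss_sq (N : ℕ) : ∑ i ∈ Finset.Icc 1 N, (i : ℝ) ^ 2 = N * (N + 1) * (2 * N + 1) / 6 := by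
  induction N with
  | zero => simp
  | succ n ih =>
    rw [Finset.sum_Icc_succ_top (by omega), ih]
    push_cast; ring

lemma mw_choose (N k : ℕ) (hk : 1 ≤ k) (hkN : k ≤ N) :
    (k : ℝ) * (N.choose k) = N * ((N - 1).choose (k - 1)) := by
  obtain ⟨N', rfl⟩ : ∃ N', N = N' + 1 := ⟨N - 1, by omega⟩
  obtain ⟨k', rfl⟩ : ∃ k', k = k' + 1 := ⟨k - 1, by omega⟩
  have h := Nat.add_one_mul_choose_eq N' k'
  simp only [Nat.add_sub_cancel]
  have : (k' + 1 : ℝ) * ((N' + 1).choose (k' + 1)) = ((N' + 1) * (N'.choose k') : ℕ) := by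
    rw [h]; push_cast; ring
  push_cast at this ⊢
  linarith

/-- The Mann-Whitney statistic `U_Y` when the `Y`-sample receives the set `s` of ranks. -/
noncomputable def mannWhitneyU (nY nZ : ℕ) (s : Finset ℕ) : ℝ :=
  (nY : ℝ) * nZ + nY * (nY + 1) / 2 - ∑ i ∈ s, (i : ℝ)

theorem stmt_15 (nY nZ : ℕ) :
    (∑ s ∈ (Finset.Icc 1 (nY + nZ)).powersetCard nY,
          (mannWhitneyU nY nZ s - (nY : ℝ) * nZ / 2) ^ 2) /
        ((Finset.Icc 1 (nY + nZ)).powersetCard nY).card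
      = (nY : ℝ) * nZ * (nY + nZ + 1) / 12 := by
  rcases Nat.eq_zero_or_pos nY with h0 | hY
  · subst h0; simp [mannWhitneyU]
  rcases Nat.eq_zero_or_pos nZ with h0 | hZ
  · subst h0
    simp only [Nat.add_zero]
    have h1 : (Finset.Icc 1 nY).powersetCard nY = {Finset.Icc 1 nY} := by
      have := Finset.powersetCard_self (Finset.Icc 1 nY)
      rw [Nat.card_Icc] at this
      simpa using this
    rw [h1, Finset.sum_singleton]
    simp [mannWhitneyU, mw_gauss]
  -- main case
  set N := nY + nZ with hN
  have hNk : nY ≤ N := by omega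
  have hN2 : 2 ≤ N := by omega
  have htc : (Finset.Icc 1 N).card = N := by rw [Nat.card_Icc]; omega
  have hPcard : ((Finset.Icc 1 N).powersetCard nY).card = N.choose nY := by
    rw [Finset.card_powersetCard, htc]
  have hexp : ∀ s ∈ (Finset.Icc 1 N).powersetCard nY,
      (mannWhitneyU nY nZ s - (nY : ℝ) * nZ / 2) ^ 2
        = ((nY : ℝ) * (N + 1) / 2) ^ 2
          - 2 * ((nY : ℝ) * (N + 1) / 2) * (∑ i ∈ s, (i : ℝ))
          + (∑ i ∈ s, (i : ℝ)) ^ 2 := by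
    intro s _
    unfold mannWhitneyU
    have : (N : ℝ) = nY + nZ := by rw [hN]; push_cast; ring
    rw [this]; ring
  rw [Finset.sum_congr rfl hexp]
  rw [Finset.sum_add_distrib, Finset.sum_sub_distrib, Finset.sum_const, hPcard,
    ← Finset.mul_sum, mw_sum_powerset_sum _ _ hY, mw_sum_powerset_sq _ _ hY, htc,
    mw_gauss, mw_gauss_sq]
  have hC : ((N.choose nY : ℕ) : ℝ) ≠ 0 :=
    Nat.cast_ne_zero.mpr (Nat.choose_pos hNk).ne'
  rw [nsmul_eq_mul, div_eq_iff hC]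
  have hN0 : (N : ℝ) ≠ 0 := by positivity
  have hN1 : (N : ℝ) - 1 ≠ 0 := by
    have : (2 : ℝ) ≤ N := by exact_mod_cast hN2
    linarith
  have h1 : (((N - 1).choose (nY - 1) : ℕ) : ℝ) = nY * (N.choose nY) / N := by
    rw [eq_div_iff hN0]
    have := mw_choose N nY hY hNk
    linarith
  have h2 : (if 2 ≤ nY then (((N - 2).choose (nY - 2) : ℕ) : ℝ) else 0)
      = ((nY : ℝ) - 1) * (nY * (N.choose nY) / N) / ((N : ℝ) - 1) := by
    rw [← h1]
    by_cases h2k : 2 ≤ nY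
    · rw [if_pos h2k, eq_div_iff hN1]
      have h := mw_choose (N - 1) (nY - 1) (by omega) (by omega)
      have e1 : N - 1 - 1 = N - 2 := by omega
      have e2 : nY - 1 - 1 = nY - 2 := by omega
      rw [e1, e2] at h
      have c1 : ((nY - 1 : ℕ) : ℝ) = (nY : ℝ) - 1 := by
        push_cast [Nat.cast_sub hY]; ring
      have c2 : ((N - 1 : ℕ) : ℝ) = (N : ℝ) - 1 := by
        have : 1 ≤ N := by omega
        push_cast [Nat.cast_sub this]; ring
      rw [c1, c2] at h
      linarith
    · rw [if_neg h2k]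
      have : nY = 1 := by omega
      subst this
      simp
  rw [h1, h2]
  have hy1 : (1:ℝ) ≤ nY := by exact_mod_cast hY
  have hz1 : (1:ℝ) ≤ nZ := by exact_mod_cast hZ
  have hNr : (N : ℝ) = (nY : ℝ) + nZ := by rw [hN]; push_cast; ring
  rw [hNr]
  have e0 : (nY : ℝ) + nZ ≠ 0 := by positivity
  have e1 : (nY : ℝ) + nZ - 1 ≠ 0 := by nlinarith
  field_simp
  ring
end
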